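/- Define v₄⁰(t) = -(sinh(t)/(2cosh²(t)))e^{-t}, v₂⁰(t) = (1/(4cosh²(t)))(1 - 2 tanh(t)), and v₃⁰(t) = (1/(4√2))(π + 4·arctan(tanh(t/2)) + (2/cosh(t))(2 - tanh(t))). Then for all t ∈ ℝ these functions satisfy the linear system v₄' = -2v₂, v₂' = -2v₂ + 3·(1/cosh²(t))·v₄, v₃' = (√2/cosh(t))·v₄, with boundary values (v₄⁰, v₂⁰, v₃⁰)(t) → (1, 0, 0) as t → -∞; moreover v₃⁰(t) → π/(2√2) as t → +∞. -/

import Mathlib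

/-!
Since `exp (-t) = cosh t - sinh t`, both `v₄` and `v₂` are polynomials in `T = tanh t`, namely
`(T² - T) / 2` and `(1 - T²)(1 - 2T) / 4`, and `T' = 1 - T² = 1 / cosh² t`; so the first two
equations are polynomial identities in `T`. For `v₃`, the function `arctan (tanh (t / 2))` is
half the Gudermannian function, with derivative `1 / (2 cosh t)`. The boundary values follow from
`tanh → ±1` and `cosh → ∞` at `±∞`.
-/

open Filter Real Topology

namespace Real

theorem tanh_eq_one_sub_two_div (x : ℝ) : tanh x = 1 - 2 / (exp (2 * x) + 1) := by
  rw [tanh_eq, mul_comm, exp_mul, exp_neg, rpow_two]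
  field_simp
  ring

theorem tendsto_tanh_atTop : Tendsto tanh atTop (𝓝 1) := by
  have hexp : Tendsto (fun x => exp (2 * x) + 1) atTop atTop :=
    tendsto_atTop_add_const_right _ 1
      (tendsto_exp_atTop.comp (tendsto_id.const_mul_atTop two_pos))
  have h := (tendsto_const_nhds (x := (1 : ℝ))).sub (hexp.const_div_atTop 2)
  rw [sub_zero] at h
  exact h.congr fun x => (tanh_eq_one_sub_two_div x).symm

theorem tendsto_tanh_atBot : Tendsto tanh atBot (𝓝 (-1)) := by
  have h := tendsto_tanh_atTop.neg.comp tendsto_neg_atBot_atTop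
  refine h.congr fun x => ?_
  simp [tanh_neg]

theorem tendsto_cosh_atTop : Tendsto cosh atTop atTop := by
  refine tendsto_atTop_mono (fun x => ?_) (tendsto_exp_atTop.atTop_div_const two_pos)
  rw [cosh_eq]
  linarith [exp_pos (-x)]

theorem tendsto_cosh_atBot : Tendsto cosh atBot atTop :=
  (tendsto_cosh_atTop.comp tendsto_neg_atBot_atTop).congr fun x => cosh_neg x

theorem one_sub_tanh_sq (x : ℝ) : 1 - tanh x ^ 2 = 1 / cosh x ^ 2 := by
  have := (cosh_pos x).ne'
  rw [tanh_eq_sinh_div_cosh]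
  field_simp
  linear_combination cosh_sq_sub_sinh_sq x

theorem hasDerivAt_tanh (x : ℝ) : HasDerivAt tanh (1 - tanh x ^ 2) x := by
  have h : HasDerivAt tanh ((cosh x * cosh x - sinh x * sinh x) / cosh x ^ 2) x := by
    rw [show tanh = sinh / cosh from funext tanh_eq_sinh_div_cosh]
    exact (hasDerivAt_sinh x).div (hasDerivAt_cosh x) (cosh_pos x).ne'
  refine h.congr_deriv ?_
  rw [one_sub_tanh_sq, ← cosh_sq_sub_sinh_sq x]
  ring

theorem one_div_cosh_eq_tanh_half (x : ℝ) :
    1 / cosh x = (1 - tanh (x / 2) ^ 2) / (1 + tanh (x / 2) ^ 2) := by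
  have := (cosh_pos (x / 2)).ne'
  have hx : cosh x = cosh (x / 2) ^ 2 + sinh (x / 2) ^ 2 := by
    rw [← cosh_two_mul, mul_div_cancel₀ x two_ne_zero]
  rw [hx, tanh_eq_sinh_div_cosh]
  field_simp
  linear_combination -cosh_sq_sub_sinh_sq (x / 2)

theorem hasDerivAt_arctan_tanh_half (x : ℝ) :
    HasDerivAt (fun t => arctan (tanh (t / 2))) (1 / (2 * cosh x)) x := by
  have h : HasDerivAt (fun t => tanh (t / 2)) ((1 - tanh (x / 2) ^ 2) * (1 / 2)) x :=
    (hasDerivAt_tanh (x / 2)).comp (h₂ := tanh) x ((hasDerivAt_id' x).div_const 2)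
  refine h.arctan.congr_deriv ?_
  rw [← div_div, div_right_comm, one_div_cosh_eq_tanh_half]
  field_simp

end Real

namespace SeparatrixZerothOrder

noncomputable section

def v₄ (t : ℝ) : ℝ := -(sinh t / (2 * cosh t ^ 2)) * exp (-t)

def v₂ (t : ℝ) : ℝ := (1 / (4 * cosh t ^ 2)) * (1 - 2 * tanh t)

def v₃ (t : ℝ) : ℝ :=
  (1 / (4 * √2)) * (π + 4 * arctan (tanh (t / 2)) + (2 / cosh t) * (2 - tanh t))

theorem v₄_eq_tanh (t : ℝ) : v₄ t = (tanh t ^ 2 - tanh t) / 2 := by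
  have := (cosh_pos t).ne'
  rw [v₄, ← cosh_sub_sinh, tanh_eq_sinh_div_cosh]
  field_simp
  ring

theorem v₂_eq_tanh (t : ℝ) : v₂ t = (1 - tanh t ^ 2) * (1 - 2 * tanh t) / 4 := by
  rw [v₂, one_sub_tanh_sq]
  ring

theorem hasDerivAt_v₄ (t : ℝ) : HasDerivAt v₄ (-2 * v₂ t) t := by
  have h := (((hasDerivAt_tanh t).fun_pow 2).sub (hasDerivAt_tanh t)).div_const 2
  rw [funext v₄_eq_tanh, v₂_eq_tanh]
  exact h.congr_deriv (by ring)

theorem hasDerivAt_v₂ (t : ℝ) :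
    HasDerivAt v₂ (-2 * v₂ t + 3 * (1 / cosh t ^ 2) * v₄ t) t := by
  have h := (((hasDerivAt_tanh t).fun_pow 2).const_sub 1).mul
    (((hasDerivAt_tanh t).const_mul 2).const_sub 1) |>.div_const 4
  rw [v₂_eq_tanh, v₄_eq_tanh, ← one_sub_tanh_sq, funext v₂_eq_tanh]
  exact h.congr_deriv (by ring)

theorem hasDerivAt_v₃ (t : ℝ) : HasDerivAt v₃ ((√2 / cosh t) * v₄ t) t := by
  have hsech : HasDerivAt (fun s => 2 / cosh s) ((0 * cosh t - 2 * sinh t) / cosh t ^ 2) t :=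
    (hasDerivAt_const t 2).div (hasDerivAt_cosh t) (cosh_pos t).ne'
  have h := ((((hasDerivAt_arctan_tanh_half t).const_mul 4).const_add π).add
    (hsech.mul ((hasDerivAt_tanh t).const_sub 2))).const_mul (1 / (4 * √2))
  refine h.congr_deriv ?_
  have hsqrt : √2 ^ 2 = 2 := sq_sqrt zero_le_two
  rw [v₄_eq_tanh, tanh_eq_sinh_div_cosh]
  field_simp
  rw [hsqrt]
  ring

theorem tendsto_v₄_atBot : Tendsto v₄ atBot (𝓝 1) := by
  have h := ((tendsto_tanh_atBot.pow 2).sub tendsto_tanh_atBot).div_const 2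
  rw [funext v₄_eq_tanh]
  convert h using 2
  norm_num

theorem tendsto_v₂_atBot : Tendsto v₂ atBot (𝓝 0) := by
  have h := ((tendsto_tanh_atBot.pow 2).const_sub 1).mul
    ((tendsto_tanh_atBot.const_mul 2).const_sub 1) |>.div_const 4
  rw [funext v₂_eq_tanh]
  convert h using 2
  norm_num

theorem tendsto_v₃ {l : Filter ℝ} {s : ℝ} (hcosh : Tendsto cosh l atTop)
    (htanh : Tendsto tanh l (𝓝 s)) (hhalf : Tendsto (fun t => t / 2) l l) :
    Tendsto v₃ l (𝓝 ((π + 4 * arctan s) / (4 * √2))) := by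
  have harctan := (continuous_arctan.tendsto s).comp (htanh.comp hhalf)
  have h := (((harctan.const_mul 4).const_add π).add
    ((hcosh.const_div_atTop 2).mul (htanh.const_sub 2))).const_mul (1 / (4 * √2))
  rw [show (π + 4 * arctan s) / (4 * √2) = 1 / (4 * √2) * (π + 4 * arctan s + 0 * (2 - s)) by
    ring]
  exact h

end

end SeparatrixZerothOrder

open SeparatrixZerothOrder

/-- The explicit zeroth-order solution `(v₄⁰, v₂⁰, v₃⁰)` of the linear
system for the separatrix value. -/
theorem zeroth_order_separatrix_system :
    let v₄ : ℝ → ℝ := fun t => -(Real.sinh t / (2 * (Real.cosh t) ^ 2)) * Real.exp (-t)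
    let v₂ : ℝ → ℝ := fun t => (1 / (4 * (Real.cosh t) ^ 2)) * (1 - 2 * Real.tanh t)
    let v₃ : ℝ → ℝ := fun t => (1 / (4 * Real.sqrt 2)) *
      (Real.pi + 4 * Real.arctan (Real.tanh (t / 2)) +
        (2 / Real.cosh t) * (2 - Real.tanh t))
    (∀ t, HasDerivAt v₄ (-2 * v₂ t) t) ∧
    (∀ t, HasDerivAt v₂ (-2 * v₂ t + 3 * (1 / (Real.cosh t) ^ 2) * v₄ t) t) ∧
    (∀ t, HasDerivAt v₃ ((Real.sqrt 2 / Real.cosh t) * v₄ t) t) ∧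
    Tendsto v₄ atBot (nhds 1) ∧
    Tendsto v₂ atBot (nhds 0) ∧
    Tendsto v₃ atBot (nhds 0) ∧
    Tendsto v₃ atTop (nhds (Real.pi / (2 * Real.sqrt 2))) := by
  refine ⟨hasDerivAt_v₄, hasDerivAt_v₂, hasDerivAt_v₃, tendsto_v₄_atBot, tendsto_v₂_atBot,
    ?_, ?_⟩
  · rw [show (0 : ℝ) = (π + 4 * arctan (-1)) / (4 * √2) by rw [arctan_neg, arctan_one]; ring]
    exact tendsto_v₃ tendsto_cosh_atBot tendsto_tanh_atBot (tendsto_id.atBot_div_const two_pos)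
  · rw [show π / (2 * √2) = (π + 4 * arctan 1) / (4 * √2) by rw [arctan_one]; field_simp; ring]
    exact tendsto_v₃ tendsto_cosh_atTop tendsto_tanh_atTop (tendsto_id.atTop_div_const two_pos)
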